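/- arXiv:0712.2063 — 5 statements merged into one kernel-verified Lean document; each statement's English description precedes it below -/
import Mathlib

section
/- Let (X,d,μ) be an mm-space, let ε > 0, and let κ be a real number with 0 < κ < α_X(ε), where α_X is the concentration function of X. Then sep_κ(X) ≥ ε; that is, there exist Borel sets A, B ⊆ X with μ(A) ≥ κ, μ(B) ≥ κ, and d(a,b) ≥ ε for all a ∈ A and b ∈ B. (This is the inequality sep_{α(ε)}(X) ≥ ε relating the separation distance and the concentration function.) -/
open MeasureTheory Metric Filter

/-- The concentration function of an mm-space `(X, d, μ)`:
`α_X(ε) = 1 − inf{ μ(A_ε) : A Borel, μ(A) ≥ 1/2 }`, where `A_ε` is the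
open `ε`-thickening of `A`. -/
noncomputable def concFn {X : Type*} [PseudoMetricSpace X] [MeasurableSpace X]
    (μ : Measure X) (ε : ℝ) : ℝ :=
  1 - sInf {r : ℝ | ∃ A : Set X, MeasurableSet A ∧ 1 / 2 ≤ (μ A).toReal ∧
      r = (μ (Metric.thickening ε A)).toReal}

/-- The `κ`-separation distance of an mm-space `(X, d, μ)`:
`sep_κ(X) = sup{δ ≥ 0 : ∃ Borel A, B with μ(A) ≥ κ, μ(B) ≥ κ and
d(a,b) ≥ δ for all a ∈ A, b ∈ B}`. -/
noncomputable def sepDist {X : Type*} [PseudoMetricSpace X] [MeasurableSpace X]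
    (μ : Measure X) (κ : ℝ) : ℝ :=
  sSup {δ : ℝ | 0 ≤ δ ∧ ∃ A B : Set X, MeasurableSet A ∧ MeasurableSet B ∧
      κ ≤ (μ A).toReal ∧ κ ≤ (μ B).toReal ∧ ∀ a ∈ A, ∀ b ∈ B, δ ≤ dist a b}

section Separation

open scoped ENNReal

variable {X : Type*} [PseudoMetricSpace X]

lemma le_dist_of_notMem_thickening {ε : ℝ} {A : Set X} {a b : X} (ha : a ∈ A)
    (hb : b ∉ thickening ε A) : ε ≤ dist a b := by
  rw [dist_comm]
  exact not_lt.1 fun h => hb (mem_thickening_iff.2 ⟨a, ha, h⟩)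

variable [MeasurableSpace X]

lemma exists_measure_compl_ball_lt [OpensMeasurableSpace X] (μ : Measure X) [IsFiniteMeasure μ]
    (x : X) {c : ℝ≥0∞} (hc : 0 < c) : ∃ R : ℝ, μ (ball x R)ᶜ < c := by
  have hlim : Tendsto (fun n : ℕ => μ (ball x n)ᶜ) atTop (nhds 0) := by
    have := tendsto_measure_iInter_atTop (μ := μ) (s := fun n : ℕ => (ball x n)ᶜ)
      (fun n : ℕ => measurableSet_ball.compl.nullMeasurableSet)
      (fun m n hmn => Set.compl_subset_compl.2 (ball_subset_ball (Nat.cast_le.2 hmn)))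
      ⟨0, measure_ne_top μ _⟩
    rwa [← Set.compl_iUnion, iUnion_ball_nat, Set.compl_univ, measure_empty] at this
  obtain ⟨n, hn⟩ := (hlim.eventually (gt_mem_nhds hc)).exists
  exact ⟨n, hn⟩

lemma inter_ball_nonempty_of_measure_compl_lt {μ : Measure X} {C : Set X} {x : X} {R κ : ℝ}
    (hR : μ (ball x R)ᶜ < ENNReal.ofReal κ) (hC : κ ≤ μ.real C) : (C ∩ ball x R).Nonempty := by
  by_contra hempty
  have hsub : C ⊆ (ball x R)ᶜ := fun y hy hyR => hempty ⟨y, hy, hyR⟩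
  exact (ENNReal.ofReal_le_of_le_toReal hC).not_gt ((measure_mono hsub).trans_lt hR)

lemma le_sepDist [OpensMeasurableSpace X] {μ : Measure X} [IsFiniteMeasure μ] {κ δ : ℝ}
    (hκ : 0 < κ) (hδ : 0 ≤ δ) {A B : Set X} (hA : MeasurableSet A) (hB : MeasurableSet B)
    (hAκ : κ ≤ μ.real A) (hBκ : κ ≤ μ.real B) (hAB : ∀ a ∈ A, ∀ b ∈ B, δ ≤ dist a b) :
    δ ≤ sepDist μ κ := by
  obtain ⟨x, -⟩ : A.Nonempty := Set.nonempty_iff_ne_empty.2 fun h => by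
    rw [h, measureReal_empty] at hAκ
    linarith
  obtain ⟨R, hR⟩ := exists_measure_compl_ball_lt μ x (ENNReal.ofReal_pos.2 hκ)
  -- `sSup` needs an upper bound: sets of measure `≥ κ` all meet `ball x R`, so none are `2R` apart
  refine le_csSup ⟨2 * R, ?_⟩ ⟨hδ, A, B, hA, hB, hAκ, hBκ, hAB⟩
  rintro δ' ⟨-, A', B', -, -, hA', hB', hA'B'⟩
  obtain ⟨a, ha, hax⟩ := inter_ball_nonempty_of_measure_compl_lt hR hA'
  obtain ⟨b, hb, hbx⟩ := inter_ball_nonempty_of_measure_compl_lt hR hB'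
  calc δ' ≤ dist a b := hA'B' a ha b hb
    _ ≤ dist a x + dist b x := dist_triangle_right a b x
    _ ≤ 2 * R := by rw [mem_ball] at hax hbx; linarith

lemma exists_measure_thickening_lt_of_lt_concFn {μ : Measure X} [IsProbabilityMeasure μ]
    {ε κ : ℝ} (hκ : κ < concFn μ ε) : ∃ A : Set X, MeasurableSet A ∧ 1 / 2 ≤ μ.real A ∧
      μ.real (thickening ε A) < 1 - κ := by
  set S := {r : ℝ | ∃ A : Set X, MeasurableSet A ∧ 1 / 2 ≤ (μ A).toReal ∧
      r = (μ (thickening ε A)).toReal}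
  have hS_bdd : BddBelow S := ⟨0, fun r ⟨_, _, _, hr⟩ => hr ▸ ENNReal.toReal_nonneg⟩
  have hS_ne : S.Nonempty := ⟨_, Set.univ, MeasurableSet.univ, by rw [measure_univ, ENNReal.toReal_one]; norm_num, rfl⟩
  obtain ⟨_, ⟨A, hA, hA_half, rfl⟩, hlt⟩ :=
    (csInf_lt_iff hS_bdd hS_ne (a := 1 - κ)).1 (by unfold concFn at hκ; linarith)
  exact ⟨A, hA, hA_half, hlt⟩

/-- Take `A` of measure `≥ 1/2` with `μ(A_ε) < 1 - κ` and `B` the complement of `A_ε`; then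
`κ < 1 - μ(A_ε) ≤ 1 - μ(A) ≤ 1/2 ≤ μ(A)`. -/
lemma exists_separated_of_lt_concFn [OpensMeasurableSpace X] {μ : Measure X}
    [IsProbabilityMeasure μ] {ε κ : ℝ} (hε : 0 < ε) (hκ : κ < concFn μ ε) :
    ∃ A B : Set X, MeasurableSet A ∧ MeasurableSet B ∧
      κ ≤ μ.real A ∧ κ ≤ μ.real B ∧ ∀ a ∈ A, ∀ b ∈ B, ε ≤ dist a b := by
  obtain ⟨A, hA, hA_half, hthick⟩ := exists_measure_thickening_lt_of_lt_concFn hκ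
  have hA_thick : μ.real A ≤ μ.real (thickening ε A) :=
    measureReal_mono (self_subset_thickening hε A)
  refine ⟨A, (thickening ε A)ᶜ, hA, isOpen_thickening.measurableSet.compl, by linarith, ?_,
    fun a ha b hb => le_dist_of_notMem_thickening ha hb⟩
  rw [probReal_compl_eq_one_sub isOpen_thickening.measurableSet]
  linarith

end Separation

/-- If `0 < κ < α_X(ε)`, then `sep_κ(X) ≥ ε`; that is, there are Borel sets
`A`, `B` of measure at least `κ` lying at distance at least `ε` from each other. -/
theorem stmt2 {X : Type*} [MetricSpace X] [MeasurableSpace X] [BorelSpace X]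
    (μ : Measure X) [IsProbabilityMeasure μ] (ε κ : ℝ) (hε : 0 < ε)
    (hκ0 : 0 < κ) (hκ : κ < concFn μ ε) :
    ε ≤ sepDist μ κ ∧
      ∃ A B : Set X, MeasurableSet A ∧ MeasurableSet B ∧
        κ ≤ (μ A).toReal ∧ κ ≤ (μ B).toReal ∧ ∀ a ∈ A, ∀ b ∈ B, ε ≤ dist a b := by
  obtain ⟨A, B, hA, hB, hAκ, hBκ, hAB⟩ := exists_separated_of_lt_concFn hε hκ
  exact ⟨le_sepDist hκ0 hε.le hA hB hAκ hBκ hAB, A, B, hA, hB, hAκ, hBκ, hAB⟩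
end

section
/- Let (X,d,μ) be an mm-space and let 0 < ε < 1. Suppose that for every 1-Lipschitz function f : X → ℝ there exists a constant c ∈ ℝ such that μ{x ∈ X : |f(x) − c| ≥ ε/2} < ε/2 (every 1-Lipschitz function is within ε/2 of a constant outside a set of measure less than ε/2). Then the concentration function of X satisfies α_X(ε) ≤ ε/2. (This is one implication of the Proposition relating the Gromov distance to a one-point space with the concentration function: d_conc(X,{∗}) ≤ ε/2 implies α(ε) ≤ ε/2.) -/
/-!
Test the hypothesis on the 1-Lipschitz function `f = d(·, A)` for a Borel set `A` with
`μ(A) ≥ 1/2`. Since `f` vanishes on `A` and `μ(A) > ε/2`, the constant `c` it provides must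
satisfy `|c| < ε/2`. Outside `A_ε` we have `f ≥ ε`, hence `|f - c| > ε/2`, so the complement of
`A_ε` lies in the exceptional set and `μ(A_ε) > 1 - ε/2`.
-/

open MeasureTheory Metric Filter

lemma abs_lt_of_measureReal_setOf_le_abs_sub_lt {X : Type*} [MeasurableSpace X]
    {μ : Measure X} [IsFiniteMeasure μ] {f : X → ℝ} {A : Set X} {c δ : ℝ}
    (hf : ∀ x ∈ A, f x = 0) (hμ : μ.real {x | δ ≤ |f x - c|} < μ.real A) : |c| < δ := by
  by_contra! hc
  have hA : A ⊆ {x | δ ≤ |f x - c|} := fun x hx ↦ by simpa [hf x hx] using hc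
  exact (measureReal_mono hA).not_gt hμ

lemma compl_thickening_subset_setOf_le_abs_infDist_sub {X : Type*} [PseudoMetricSpace X]
    {A : Set X} (hA : A.Nonempty) {ε c : ℝ} (hc : |c| < ε / 2) :
    (thickening ε A)ᶜ ⊆ {x | ε / 2 ≤ |infDist x A - c|} := by
  intro x hx
  have hfar : ε ≤ infDist x A := not_lt.mp fun h ↦ hx ((mem_thickening_iff_infDist_lt hA).2 h)
  have := le_abs_self c
  exact (show ε / 2 ≤ infDist x A - c by linarith).trans (le_abs_self _)

lemma one_sub_lt_measureReal_thickening {X : Type*} [PseudoMetricSpace X] [MeasurableSpace X]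
    [BorelSpace X] {μ : Measure X} [IsProbabilityMeasure μ] {A : Set X} {ε : ℝ}
    (hA : ε / 2 < μ.real A) (h : ∃ c, μ.real {x | ε / 2 ≤ |infDist x A - c|} < ε / 2) :
    1 - ε / 2 < μ.real (thickening ε A) := by
  obtain ⟨c, hc⟩ := h
  have hcε : |c| < ε / 2 :=
    abs_lt_of_measureReal_setOf_le_abs_sub_lt (fun x hx ↦ infDist_zero_of_mem hx) (hc.trans hA)
  have hAne : A.Nonempty := Set.nonempty_iff_ne_empty.2 fun hA0 ↦ by
    simp only [hA0, measureReal_empty] at hA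
    linarith [abs_nonneg c]
  have hcompl : μ.real (thickening ε A)ᶜ < ε / 2 :=
    (measureReal_mono (compl_thickening_subset_setOf_le_abs_infDist_sub hAne hcε)).trans_lt hc
  rw [probReal_compl_eq_one_sub isOpen_thickening.measurableSet] at hcompl
  linarith

lemma concFn_le_of_forall_one_sub_le_measureReal_thickening {X : Type*} [PseudoMetricSpace X]
    [MeasurableSpace X] {μ : Measure X} [IsProbabilityMeasure μ] {ε δ : ℝ}
    (h : ∀ A, MeasurableSet A → 1 / 2 ≤ μ.real A → 1 - δ ≤ μ.real (thickening ε A)) :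
    concFn μ ε ≤ δ := by
  have hne : (μ (thickening ε Set.univ)).toReal ∈ {r : ℝ | ∃ A : Set X, MeasurableSet A ∧
      1 / 2 ≤ (μ A).toReal ∧ r = (μ (thickening ε A)).toReal} :=
    ⟨Set.univ, MeasurableSet.univ, by norm_num, rfl⟩
  have := le_csInf ⟨_, hne⟩ (by rintro r ⟨A, hA, hA2, rfl⟩; exact h A hA hA2)
  rw [concFn]
  linarith

theorem stmt5_general {X : Type*} [MetricSpace X] [MeasurableSpace X] [BorelSpace X]
    (μ : Measure X) [IsProbabilityMeasure μ] (ε : ℝ) (hε1 : ε < 1)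
    (h : ∀ f : X → ℝ, LipschitzWith 1 f →
      ∃ c : ℝ, (μ {x | ε / 2 ≤ |f x - c|}).toReal < ε / 2) :
    concFn μ ε ≤ ε / 2 :=
  concFn_le_of_forall_one_sub_le_measureReal_thickening fun A _ hA ↦
    (one_sub_lt_measureReal_thickening (by linarith) (h _ (lipschitz_infDist_pt A))).le

/-- If every 1-Lipschitz function on `X` is within `ε/2` of a constant outside a
set of measure `< ε/2`, then `α_X(ε) ≤ ε/2`.  (One implication of the Proposition
relating the Gromov distance to a one-point space with the concentration function.) -/
theorem stmt5 {X : Type*} [MetricSpace X] [MeasurableSpace X] [BorelSpace X]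
    (μ : Measure X) [IsProbabilityMeasure μ] (ε : ℝ) (hε0 : 0 < ε) (hε1 : ε < 1)
    (h : ∀ f : X → ℝ, LipschitzWith 1 f →
      ∃ c : ℝ, (μ {x | ε / 2 ≤ |f x - c|}).toReal < ε / 2) :
    concFn μ ε ≤ ε / 2 :=
  stmt5_general μ ε hε1 h
end

section
/- Let S^n denote the unit sphere of the Euclidean space ℝ^{n+1}, equipped with the Euclidean (chordal) distance and its unique rotation-invariant Borel probability measure μ_n. Let m_n = ∫∫ ‖x − y‖ dμ_n(x) dμ_n(y) be the mean distance and σ_n² the variance of the distance function with respect to μ_n ⊗ μ_n. Then the intrinsic dimensionality of Chávez et al. of the spheres has the exact order of magnitude n: there exist constants 0 < c < C and N such that c·n ≤ m_n²/(2σ_n²) ≤ C·n for all n ≥ N. (This is the Axiom of normalization satisfied by dim_dist.) -/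
/-!
Write `t = ⟪x, y⟫` for independent `x, y ∼ μ`. Invariance under the reflections `x ↦ -x`,
`x_i ↦ -x_i` and the coordinate swaps makes the second-moment matrix `𝔼 x xᵀ` equal to
`I / (n + 1)`, hence `𝔼 t = 0` and `𝔼 t² = 1 / (n + 1)`. On the sphere `dist x y = √2 √(1 - t)`
and `dist² = 2 - 2 t`, so `σ² = 2 - m²`. Squeezing `√(1 - t)` between the quadratics
`1 - t / 2 - t² / 2` and `1 - t / 2 - t² / 16` pins `m` to `√2 (1 - Θ(1 / n))`, so that
`σ² = 2 - m² = Θ(1 / n)` and `m² / (2 σ²) = Θ(n)`.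
-/

open MeasureTheory Metric ProbabilityTheory
open scoped RealInnerProductSpace

lemma one_sub_div_two_sub_sq_div_two_le_sqrt_one_sub (t : ℝ) :
    1 - t / 2 - t ^ 2 / 2 ≤ √(1 - t) := by
  rcases le_or_gt t 1 with ht | ht
  · have hs := Real.sq_sqrt (sub_nonneg.2 ht)
    -- with `s = √(1 - t)` the difference is `s (s - 1)² (s + 2) / 2`
    nlinarith [Real.sqrt_nonneg (1 - t),
      mul_nonneg (Real.sqrt_nonneg (1 - t)) (sq_nonneg (√(1 - t) - 1))]
  · nlinarith [Real.sqrt_nonneg (1 - t)]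

lemma sqrt_one_sub_le_one_sub_div_two_sub_sq_div_sixteen {t : ℝ} (ht₁ : -1 ≤ t) (ht₂ : t ≤ 1) :
    √(1 - t) ≤ 1 - t / 2 - t ^ 2 / 16 := by
  have hs := Real.sq_sqrt (sub_nonneg.2 ht₂)
  have hs_le : √(1 - t) ≤ 3 / 2 := by nlinarith [Real.sqrt_nonneg (1 - t)]
  -- with `s = √(1 - t)` the difference is `(s - 1)² (7 - 2 s - s²) / 16`
  nlinarith [Real.sqrt_nonneg (1 - t), mul_nonneg (sq_nonneg (√(1 - t) - 1))
    (show 0 ≤ 7 - 2 * √(1 - t) - √(1 - t) ^ 2 by nlinarith [Real.sqrt_nonneg (1 - t)])]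

lemma dist_eq_sqrt_two_mul_sqrt_one_sub_inner {E : Type*} [NormedAddCommGroup E]
    [InnerProductSpace ℝ E] {x y : E} (hx : ‖x‖ = 1) (hy : ‖y‖ = 1) :
    dist x y = √2 * √(1 - ⟪x, y⟫) := by
  rw [← Real.sqrt_mul zero_le_two, ← Real.sqrt_sq dist_nonneg, dist_eq_norm, norm_sub_sq_real,
    hx, hy]
  ring_nf

lemma integral_comp_linearIsometryEquiv_of_map_eq {E : Type*} [NormedAddCommGroup E]
    [NormedSpace ℝ E] [MeasurableSpace E] [BorelSpace E] {μ : Measure E} (T : E ≃ₗᵢ[ℝ] E)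
    (hT : μ.map T = μ) (f : E → ℝ) : ∫ x, f (T x) ∂μ = ∫ x, f x ∂μ :=
  MeasurePreserving.integral_comp ⟨T.continuous.measurable, hT⟩
    T.toHomeomorph.measurableEmbedding f

section Coordinates

variable {ι : Type*} [Fintype ι]

lemma EuclideanSpace.real_inner_eq_sum (x y : EuclideanSpace ℝ ι) : ⟪x, y⟫ = ∑ i, x i * y i := by
  simp [PiLp.inner_apply, mul_comm]

noncomputable def coordReflection [DecidableEq ι] (i : ι) :
    EuclideanSpace ℝ ι ≃ₗᵢ[ℝ] EuclideanSpace ℝ ι :=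
  LinearIsometryEquiv.piLpCongrRight 2 fun j =>
    if j = i then LinearIsometryEquiv.neg ℝ else LinearIsometryEquiv.refl ℝ ℝ

lemma coordReflection_apply [DecidableEq ι] (i j : ι) (x : EuclideanSpace ℝ ι) :
    coordReflection i x j = if j = i then -x j else x j := by
  by_cases h : j = i <;> simp [coordReflection, h]

variable {μ : Measure (EuclideanSpace ℝ ι)}

lemma integral_apply_eq_zero
    (hμ : ∀ T : EuclideanSpace ℝ ι ≃ₗᵢ[ℝ] EuclideanSpace ℝ ι, μ.map T = μ) (i : ι) :
    ∫ x, x i ∂μ = 0 := by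
  have h := integral_comp_linearIsometryEquiv_of_map_eq _ (hμ (.neg ℝ)) fun x => x i
  simp only [LinearIsometryEquiv.coe_neg, PiLp.neg_apply, integral_neg] at h
  linarith

lemma integral_apply_mul_apply_of_ne
    (hμ : ∀ T : EuclideanSpace ℝ ι ≃ₗᵢ[ℝ] EuclideanSpace ℝ ι, μ.map T = μ) {i j : ι}
    (hij : i ≠ j) : ∫ x, x i * x j ∂μ = 0 := by
  classical
  have h := integral_comp_linearIsometryEquiv_of_map_eq _ (hμ (coordReflection i))
    fun x => x i * x j
  simp only [coordReflection_apply, if_pos, if_neg hij.symm, neg_mul, integral_neg] at h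
  linarith

lemma integrable_apply [IsFiniteMeasure μ] (hμ₁ : ∀ᵐ x ∂μ, ‖x‖ = 1) (i : ι) :
    Integrable (fun x => x i) μ :=
  Integrable.of_bound (by fun_prop) 1 (hμ₁.mono fun x hx => hx ▸ PiLp.norm_apply_le x i)

lemma integrable_apply_mul_apply [IsFiniteMeasure μ] (hμ₁ : ∀ᵐ x ∂μ, ‖x‖ = 1) (i j : ι) :
    Integrable (fun x => x i * x j) μ := by
  refine Integrable.of_bound (by fun_prop) 1 (hμ₁.mono fun x hx => ?_)
  rw [norm_mul]
  exact mul_le_one₀ (hx ▸ PiLp.norm_apply_le x i) (norm_nonneg _) (hx ▸ PiLp.norm_apply_le x j)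

lemma integral_apply_sq_eq_inv_card [IsProbabilityMeasure μ] (hμ₁ : ∀ᵐ x ∂μ, ‖x‖ = 1)
    (hμ : ∀ T : EuclideanSpace ℝ ι ≃ₗᵢ[ℝ] EuclideanSpace ℝ ι, μ.map T = μ) (i : ι) :
    ∫ x, x i ^ 2 ∂μ = (Fintype.card ι : ℝ)⁻¹ := by
  classical
  have h_swap (j : ι) : ∫ x, x j ^ 2 ∂μ = ∫ x, x i ^ 2 ∂μ := by
    have h := integral_comp_linearIsometryEquiv_of_map_eq _
      (hμ (LinearIsometryEquiv.piLpCongrLeft 2 ℝ ℝ (Equiv.swap i j))) fun x => x j ^ 2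
    simpa [Equiv.piCongrLeft'_apply] using h.symm
  have h_sum : ∑ j, ∫ x, x j ^ 2 ∂μ = 1 := by
    rw [← integral_finsetSum _ fun j _ => ?_]
    · rw [integral_congr_ae (g := fun _ => 1), integral_const, probReal_univ, one_smul]
      filter_upwards [hμ₁] with x hx
      simp [← EuclideanSpace.real_norm_sq_eq, hx]
    · simpa [sq] using integrable_apply_mul_apply hμ₁ j j
  simp only [h_swap, Finset.sum_const, Finset.card_univ, nsmul_eq_mul] at h_sum
  exact eq_inv_of_mul_eq_one_right h_sum

lemma integral_apply_mul_apply [DecidableEq ι] [IsProbabilityMeasure μ]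
    (hμ₁ : ∀ᵐ x ∂μ, ‖x‖ = 1)
    (hμ : ∀ T : EuclideanSpace ℝ ι ≃ₗᵢ[ℝ] EuclideanSpace ℝ ι, μ.map T = μ) (i j : ι) :
    ∫ x, x i * x j ∂μ = if i = j then (Fintype.card ι : ℝ)⁻¹ else 0 := by
  split_ifs with hij
  · subst hij
    simpa [sq] using integral_apply_sq_eq_inv_card hμ₁ hμ i
  · exact integral_apply_mul_apply_of_ne hμ hij

lemma ae_prod_norm_eq_one [SFinite μ] (hμ₁ : ∀ᵐ x ∂μ, ‖x‖ = 1) :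
    ∀ᵐ p ∂μ.prod μ, ‖p.1‖ = 1 ∧ ‖p.2‖ = 1 :=
  (Measure.quasiMeasurePreserving_fst.ae hμ₁).and (Measure.quasiMeasurePreserving_snd.ae hμ₁)

variable [IsProbabilityMeasure μ]

lemma ae_prod_abs_inner_le_one (hμ₁ : ∀ᵐ x ∂μ, ‖x‖ = 1) :
    ∀ᵐ p ∂μ.prod μ, |⟪p.1, p.2⟫| ≤ 1 := by
  filter_upwards [ae_prod_norm_eq_one hμ₁] with p ⟨h₁, h₂⟩
  simpa [h₁, h₂] using abs_real_inner_le_norm p.1 p.2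

lemma integrable_inner_prod (hμ₁ : ∀ᵐ x ∂μ, ‖x‖ = 1) :
    Integrable (fun p => ⟪p.1, p.2⟫) (μ.prod μ) :=
  Integrable.of_bound (by fun_prop) 1 (ae_prod_abs_inner_le_one hμ₁)

lemma integrable_inner_sq_prod (hμ₁ : ∀ᵐ x ∂μ, ‖x‖ = 1) :
    Integrable (fun p => ⟪p.1, p.2⟫ ^ 2) (μ.prod μ) :=
  Integrable.of_bound (by fun_prop) 1 ((ae_prod_abs_inner_le_one hμ₁).mono fun p hp => by
    rw [norm_pow, Real.norm_eq_abs]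
    exact pow_le_one₀ (abs_nonneg _) hp)

lemma integrable_sqrt_one_sub_inner_prod (hμ₁ : ∀ᵐ x ∂μ, ‖x‖ = 1) :
    Integrable (fun p => √(1 - ⟪p.1, p.2⟫)) (μ.prod μ) :=
  Integrable.of_bound (by fun_prop) √2 ((ae_prod_abs_inner_le_one hμ₁).mono fun p hp => by
    rw [Real.norm_of_nonneg (Real.sqrt_nonneg _)]
    exact Real.sqrt_le_sqrt (by linarith [(abs_le.1 hp).1]))

lemma integral_inner_prod (hμ₁ : ∀ᵐ x ∂μ, ‖x‖ = 1)
    (hμ : ∀ T : EuclideanSpace ℝ ι ≃ₗᵢ[ℝ] EuclideanSpace ℝ ι, μ.map T = μ) :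
    ∫ p, ⟪p.1, p.2⟫ ∂μ.prod μ = 0 := by
  simp_rw [EuclideanSpace.real_inner_eq_sum]
  rw [integral_finsetSum _ fun i _ => (integrable_apply hμ₁ i).mul_prod (integrable_apply hμ₁ i)]
  refine Finset.sum_eq_zero fun i _ => ?_
  rw [integral_prod_mul (fun x : EuclideanSpace ℝ ι => x i) (fun x : EuclideanSpace ℝ ι => x i),
    integral_apply_eq_zero hμ, zero_mul]

lemma integral_inner_sq_prod (hμ₁ : ∀ᵐ x ∂μ, ‖x‖ = 1)
    (hμ : ∀ T : EuclideanSpace ℝ ι ≃ₗᵢ[ℝ] EuclideanSpace ℝ ι, μ.map T = μ) :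
    ∫ p, ⟪p.1, p.2⟫ ^ 2 ∂μ.prod μ = (Fintype.card ι : ℝ)⁻¹ := by
  classical
  have h_int (i j : ι) : Integrable (fun p : EuclideanSpace ℝ ι × EuclideanSpace ℝ ι =>
      p.1 i * p.1 j * (p.2 i * p.2 j)) (μ.prod μ) :=
    (integrable_apply_mul_apply hμ₁ i j).mul_prod (integrable_apply_mul_apply hμ₁ i j)
  have h_expand (x y : EuclideanSpace ℝ ι) :
      ⟪x, y⟫ ^ 2 = ∑ i, ∑ j, x i * x j * (y i * y j) := by
    simp_rw [EuclideanSpace.real_inner_eq_sum, sq, Finset.sum_mul_sum]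
    exact Finset.sum_congr rfl fun i _ => Finset.sum_congr rfl fun j _ => by ring
  simp_rw [h_expand]
  rw [integral_finsetSum _ fun i _ => integrable_finsetSum _ fun j _ => h_int i j]
  simp_rw [integral_finsetSum _ fun j _ => h_int _ j]
  have h_factor (i j : ι) : ∫ p : EuclideanSpace ℝ ι × EuclideanSpace ℝ ι,
      p.1 i * p.1 j * (p.2 i * p.2 j) ∂μ.prod μ = (∫ x, x i * x j ∂μ) ^ 2 :=
    (integral_prod_mul (fun x : EuclideanSpace ℝ ι => x i * x j)
      (fun x : EuclideanSpace ℝ ι => x i * x j)).trans (sq _).symm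
  simp only [h_factor, integral_apply_mul_apply hμ₁ hμ, ite_pow, inv_pow, ne_eq,
    OfNat.ofNat_ne_zero, not_false_eq_true, zero_pow, Finset.sum_ite_eq, Finset.mem_univ,
    ↓reduceIte, Finset.sum_const, Finset.card_univ, nsmul_eq_mul]
  rcases eq_or_ne (Fintype.card ι : ℝ) 0 with h | h
  · simp [h]
  · field_simp

lemma integrable_quadratic_inner_prod (hμ₁ : ∀ᵐ x ∂μ, ‖x‖ = 1) (d : ℝ) :
    Integrable (fun p => 1 - ⟪p.1, p.2⟫ / 2 - ⟪p.1, p.2⟫ ^ 2 / d) (μ.prod μ) :=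
  ((integrable_const 1).sub ((integrable_inner_prod hμ₁).div_const 2)).sub
    ((integrable_inner_sq_prod hμ₁).div_const d)

lemma integral_quadratic_inner_prod (hμ₁ : ∀ᵐ x ∂μ, ‖x‖ = 1)
    (hμ : ∀ T : EuclideanSpace ℝ ι ≃ₗᵢ[ℝ] EuclideanSpace ℝ ι, μ.map T = μ) (d : ℝ) :
    ∫ p, (1 - ⟪p.1, p.2⟫ / 2 - ⟪p.1, p.2⟫ ^ 2 / d) ∂μ.prod μ = 1 - 1 / (d * Fintype.card ι) := by
  have h_lin : Integrable (fun p : EuclideanSpace ℝ ι × EuclideanSpace ℝ ι =>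
      1 - ⟪p.1, p.2⟫ / 2) (μ.prod μ) :=
    (integrable_const 1).sub ((integrable_inner_prod hμ₁).div_const 2)
  rw [integral_sub h_lin ((integrable_inner_sq_prod hμ₁).div_const d),
    integral_sub (integrable_const 1) ((integrable_inner_prod hμ₁).div_const 2),
    integral_div, integral_div, integral_inner_prod hμ₁ hμ, integral_inner_sq_prod hμ₁ hμ]
  simp [div_eq_mul_inv, mul_comm]

lemma integral_dist_eq_sqrt_two_mul (hμ₁ : ∀ᵐ x ∂μ, ‖x‖ = 1) :
    ∫ p, dist p.1 p.2 ∂μ.prod μ = √2 * ∫ p, √(1 - ⟪p.1, p.2⟫) ∂μ.prod μ := by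
  rw [← integral_const_mul]
  exact integral_congr_ae ((ae_prod_norm_eq_one hμ₁).mono fun p hp =>
    dist_eq_sqrt_two_mul_sqrt_one_sub_inner hp.1 hp.2)

lemma sqrt_two_mul_le_integral_dist (hμ₁ : ∀ᵐ x ∂μ, ‖x‖ = 1)
    (hμ : ∀ T : EuclideanSpace ℝ ι ≃ₗᵢ[ℝ] EuclideanSpace ℝ ι, μ.map T = μ) :
    √2 * (1 - 1 / (2 * Fintype.card ι)) ≤ ∫ p, dist p.1 p.2 ∂μ.prod μ := by
  rw [integral_dist_eq_sqrt_two_mul hμ₁, ← integral_quadratic_inner_prod hμ₁ hμ]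
  refine mul_le_mul_of_nonneg_left ?_ (Real.sqrt_nonneg 2)
  exact integral_mono (integrable_quadratic_inner_prod hμ₁ 2)
    (integrable_sqrt_one_sub_inner_prod hμ₁) fun p =>
      one_sub_div_two_sub_sq_div_two_le_sqrt_one_sub _

lemma integral_dist_le_sqrt_two_mul (hμ₁ : ∀ᵐ x ∂μ, ‖x‖ = 1)
    (hμ : ∀ T : EuclideanSpace ℝ ι ≃ₗᵢ[ℝ] EuclideanSpace ℝ ι, μ.map T = μ) :
    ∫ p, dist p.1 p.2 ∂μ.prod μ ≤ √2 * (1 - 1 / (16 * Fintype.card ι)) := by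
  rw [integral_dist_eq_sqrt_two_mul hμ₁, ← integral_quadratic_inner_prod hμ₁ hμ]
  refine mul_le_mul_of_nonneg_left ?_ (Real.sqrt_nonneg 2)
  refine integral_mono_ae (integrable_sqrt_one_sub_inner_prod hμ₁)
    (integrable_quadratic_inner_prod hμ₁ 16) ?_
  filter_upwards [ae_prod_abs_inner_le_one hμ₁] with p hp
  exact sqrt_one_sub_le_one_sub_div_two_sub_sq_div_sixteen (abs_le.1 hp).1 (abs_le.1 hp).2

lemma variance_dist_eq (hμ₁ : ∀ᵐ x ∂μ, ‖x‖ = 1)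
    (hμ : ∀ T : EuclideanSpace ℝ ι ≃ₗᵢ[ℝ] EuclideanSpace ℝ ι, μ.map T = μ) :
    variance (fun p => dist p.1 p.2) (μ.prod μ) = 2 - (∫ p, dist p.1 p.2 ∂μ.prod μ) ^ 2 := by
  have h_bound : ∀ᵐ p ∂μ.prod μ, ‖dist p.1 p.2‖ ≤ 2 :=
    (ae_prod_norm_eq_one hμ₁).mono fun p hp => by
      simpa [hp.1, hp.2, one_add_one_eq_two] using dist_le_norm_add_norm p.1 p.2
  have h_sq : ∀ᵐ p ∂μ.prod μ, dist p.1 p.2 ^ 2 = 2 - 2 * ⟪p.1, p.2⟫ :=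
    (ae_prod_norm_eq_one hμ₁).mono fun p hp => by
      rw [dist_eq_norm, norm_sub_sq_real, hp.1, hp.2]
      ring
  rw [variance_eq_sub (MemLp.of_bound (by fun_prop) 2 h_bound)]
  simp only [Pi.pow_apply]
  rw [integral_congr_ae h_sq, integral_sub (integrable_const 2)
    ((integrable_inner_prod hμ₁).const_mul 2), integral_const_mul, integral_inner_prod hμ₁ hμ]
  simp

end Coordinates

lemma sq_div_two_mul_two_sub_sq_mem_Icc {N m : ℝ} (hN : 2 ≤ N)
    (h_low : √2 * (1 - 1 / (2 * N)) ≤ m) (h_up : m ≤ √2 * (1 - 1 / (16 * N))) :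
    m ^ 2 / (2 * (2 - m ^ 2)) ∈ Set.Icc (N / 4) (5 * N) := by
  set a := 1 / N with ha
  have ha_pos : 0 < a := by positivity
  have ha_le : a ≤ 1 / 2 := by rw [ha, div_le_div_iff₀ (by linarith) two_pos]; linarith
  have hNa : N * a = 1 := by rw [ha]; field_simp
  rw [show 1 / (2 * N) = a / 2 by rw [ha]; ring] at h_low
  rw [show 1 / (16 * N) = a / 16 by rw [ha]; ring] at h_up
  have h_two : √2 ^ 2 = 2 := Real.sq_sqrt zero_le_two
  have hm_sq_low : 2 * (1 - a / 2) ^ 2 ≤ m ^ 2 := by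
    have h := pow_le_pow_left₀ (mul_nonneg (Real.sqrt_nonneg 2) (by linarith)) h_low 2
    rwa [mul_pow, h_two] at h
  have hm_sq_up : m ^ 2 ≤ 2 * (1 - a / 16) ^ 2 := by
    have h := pow_le_pow_left₀ ((mul_nonneg (Real.sqrt_nonneg 2) (by linarith)).trans h_low) h_up 2
    rwa [mul_pow, h_two] at h
  have hv_low : a / 5 ≤ 2 - m ^ 2 := by nlinarith
  have hv_up : 2 - m ^ 2 ≤ 2 * a := by nlinarith
  constructor
  · rw [le_div_iff₀ (by linarith)]
    nlinarith
  · rw [div_le_iff₀ (by linarith)]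
    nlinarith

/-- The intrinsic dimensionality of Chávez et al. of the unit Euclidean spheres
`S^n ⊆ ℝ^{n+1}` (with the chordal distance and the unique rotation-invariant
Borel probability measure `μ_n`) has the exact order of magnitude `Θ(n)`:
there are constants `0 < c < C` and `N` with `c·n ≤ m_n²/(2σ_n²) ≤ C·n` for all
`n ≥ N`, where `m_n` is the mean and `σ_n²` the variance of the distance function
with respect to `μ_n ⊗ μ_n`. -/
theorem stmt8 :
    ∃ c C : ℝ, 0 < c ∧ c < C ∧ ∃ N : ℕ, ∀ n : ℕ, N ≤ n →
      ∀ μ : Measure (EuclideanSpace ℝ (Fin (n + 1))), IsProbabilityMeasure μ →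
        μ (Metric.sphere (0 : EuclideanSpace ℝ (Fin (n + 1))) 1) = 1 →
        (∀ T : EuclideanSpace ℝ (Fin (n + 1)) ≃ₗᵢ[ℝ] EuclideanSpace ℝ (Fin (n + 1)),
          Measure.map T μ = μ) →
        c * n ≤
            (∫ p : EuclideanSpace ℝ (Fin (n + 1)) × EuclideanSpace ℝ (Fin (n + 1)),
                dist p.1 p.2 ∂(μ.prod μ)) ^ 2 /
              (2 * variance
                (fun p : EuclideanSpace ℝ (Fin (n + 1)) × EuclideanSpace ℝ (Fin (n + 1)) =>
                  dist p.1 p.2) (μ.prod μ)) ∧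
          (∫ p : EuclideanSpace ℝ (Fin (n + 1)) × EuclideanSpace ℝ (Fin (n + 1)),
                dist p.1 p.2 ∂(μ.prod μ)) ^ 2 /
              (2 * variance
                (fun p : EuclideanSpace ℝ (Fin (n + 1)) × EuclideanSpace ℝ (Fin (n + 1)) =>
                  dist p.1 p.2) (μ.prod μ)) ≤ C * n := by
  refine ⟨1 / 4, 10, by norm_num, by norm_num, 1, fun n hn μ _ h_sphere hμ => ?_⟩
  have hμ₁ : ∀ᵐ x ∂μ, ‖x‖ = 1 := by
    filter_upwards [mem_ae_iff.2 ((prob_compl_eq_zero_iff isClosed_sphere.measurableSet).2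
      h_sphere)] with x hx
    simpa using hx
  have h_card : (Fintype.card (Fin (n + 1)) : ℝ) = n + 1 := by simp
  have hn_real : (1 : ℝ) ≤ n := by exact_mod_cast hn
  have h_mem := sq_div_two_mul_two_sub_sq_mem_Icc (N := n + 1) (by linarith)
    (h_card ▸ sqrt_two_mul_le_integral_dist hμ₁ hμ)
    (h_card ▸ integral_dist_le_sqrt_two_mul hμ₁ hμ)
  rw [variance_dist_eq hμ₁ hμ]
  constructor <;> linarith [h_mem.1, h_mem.2]
end

section
/- The Hamming cubes form a Lévy family: equip Σ_n = {0,1}^n with the normalized Hamming distance d(σ,τ) = (1/n)·|{i : σ_i ≠ τ_i}| and the normalized counting (uniform) measure μ_n. Then for every ε > 0, the concentration functions tend to zero: sup{1 − μ_n(A_ε) : A ⊆ Σ_n, μ_n(A) ≥ 1/2} → 0 as n → ∞, where A_ε = {x ∈ Σ_n : d(x,A) < ε} is the open ε-thickening; i.e. α_{Σ_n}(ε) → 0 for every ε > 0. -/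
/-!
The core is Talagrand's exponential inequality on the cube: for `t ≥ 0` and every `A ⊆ {0,1}ⁿ`,
`|A| · ∑ₓ exp (t · d(x, A)) ≤ (2 + eᵗ + e⁻ᵗ)ⁿ`, where `d` is the unnormalized Hamming distance.
It goes by induction on `n`, splitting `A` by the first coordinate into slices `A₀` (the larger)
and `A₁`. A point whose first bit is that of `A₁` lies within `d(y, A₁)` and within `1 + d(y, A₀)`
of `A`; bounding its term by the convex combination with weight `θ = |A₁|/|A₀|` reduces the step
to `(1 + θ)(2 + (1 - θ)eᵗ) ≤ 2 + eᵗ + e⁻ᵗ`, which is `(θeᵗ - 1)² ≥ 0`.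
Since `2 + eᵗ + e⁻ᵗ = 4 cosh² (t/2) ≤ 4 e^{t²/4}`, Markov's inequality with `t = 2ε` bounds the
proportion of points at normalized distance `≥ ε` from a set of measure `≥ 1/2` by `2 e^{-ε² n}`.
-/

open Filter Finset Real

section InfHammingDist

variable {ι : Type*} {β : ι → Type*} [Fintype ι] [∀ i, DecidableEq (β i)]

-- For `A = ∅` this is `sInf ∅ = 0`; the bounds below are weighted by `#A`, so this is harmless.
noncomputable def infHammingDist (A : Finset (∀ i, β i)) (x : ∀ i, β i) : ℕ :=
  ⨅ a : A, hammingDist x a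

theorem infHammingDist_le {A : Finset (∀ i, β i)} {a : ∀ i, β i} (ha : a ∈ A) (x : ∀ i, β i) :
    infHammingDist A x ≤ hammingDist x a :=
  ciInf_le (OrderBot.bddBelow _) (⟨a, ha⟩ : A)

theorem exists_mem_infHammingDist_eq {A : Finset (∀ i, β i)} (hA : A.Nonempty) (x : ∀ i, β i) :
    ∃ a ∈ A, infHammingDist A x = hammingDist x a := by
  have := hA.to_subtype
  obtain ⟨⟨a, ha⟩, h⟩ := ciInf_mem fun a : A => hammingDist x a
  exact ⟨a, ha, h.symm⟩

end InfHammingDist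

theorem hammingDist_cons {n : ℕ} {α : Fin (n + 1) → Type*} [∀ i, DecidableEq (α i)]
    (a b : α 0) (y z : ∀ i, α (Fin.succ i)) :
    hammingDist (Fin.cons a y : ∀ i, α i) (Fin.cons b z) =
      hammingDist y z + if a = b then 0 else 1 := by
  simp only [hammingDist, card_filter, Fin.sum_univ_succ, Fin.cons_zero, Fin.cons_succ]
  split_ifs <;> simp_all [add_comm]

theorem Fintype.sum_pi_fin_succ {α M : Type*} [Fintype α] [AddCommMonoid M] {n : ℕ}
    (g : (Fin (n + 1) → α) → M) :
    ∑ x, g x = ∑ b, ∑ y : Fin n → α, g (Fin.cons b y) := by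
  rw [← (Fin.consEquiv fun _ => α).sum_comp, Fintype.sum_prod_type]
  rfl

theorem Bool.sum_eq_add_not {M : Type*} [AddCommMonoid M] (f : Bool → M) (c : Bool) :
    ∑ b, f b = f c + f !c := by
  cases c <;> simp [add_comm]

theorem add_mul_add_le_of_slice_bounds {a₀ a₁ S T F₀ F₁ E C : ℝ} (hE : 0 < E) (ha₁ : 0 ≤ a₁)
    (ha : a₁ ≤ a₀) (hF₀ : 0 ≤ F₀) (hS : S ≤ F₀) (hT₀ : T ≤ E * F₀) (hT₁ : 0 < a₁ → T ≤ F₁)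
    (h₀ : a₀ * F₀ ≤ C) (h₁ : a₁ * F₁ ≤ C) :
    (a₀ + a₁) * (S + T) ≤ (2 + E + E⁻¹) * C := by
  have hC : 0 ≤ C := (mul_nonneg (ha₁.trans ha) hF₀).trans h₀
  have hEinv : 0 < E⁻¹ := inv_pos.2 hE
  rcases ha₁.eq_or_lt with rfl | ha₁
  · calc (a₀ + 0) * (S + T) ≤ a₀ * (F₀ + E * F₀) := by
          rw [add_zero]; exact mul_le_mul_of_nonneg_left (add_le_add hS hT₀) ha
      _ = (1 + E) * (a₀ * F₀) := by ring
      _ ≤ (2 + E + E⁻¹) * C := mul_le_mul (by linarith) h₀ (mul_nonneg ha hF₀) (by positivity)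
  set θ := a₁ / a₀ with hθ
  have ha₀ : 0 < a₀ := ha₁.trans_le ha
  have hθ₀ : 0 ≤ θ := by positivity
  have hθ₁ : θ ≤ 1 := (div_le_one ha₀).2 ha
  have ha₁θ : a₁ = θ * a₀ := by rw [hθ, div_mul_cancel₀ _ ha₀.ne']
  have hT : T ≤ θ * F₁ + (1 - θ) * (E * F₀) := by
    nlinarith [hT₁ ha₁]
  have hquad : (1 + θ) * (2 + (1 - θ) * E) ≤ 2 + E + E⁻¹ := by
    have : 2 + E + E⁻¹ - (1 + θ) * (2 + (1 - θ) * E) = (θ * E - 1) ^ 2 * E⁻¹ := by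
      field_simp; ring
    nlinarith [sq_nonneg (θ * E - 1)]
  calc (a₀ + a₁) * (S + T) ≤ (a₀ + a₁) * (F₀ + (θ * F₁ + (1 - θ) * (E * F₀))) := by
        gcongr
    _ = (1 + θ) * ((1 + (1 - θ) * E) * (a₀ * F₀) + a₁ * F₁) := by rw [ha₁θ]; ring
    _ ≤ (1 + θ) * ((1 + (1 - θ) * E) * C + C) := by
        gcongr
    _ = (1 + θ) * (2 + (1 - θ) * E) * C := by ring
    _ ≤ (2 + E + E⁻¹) * C := by gcongr

theorem two_add_exp_add_exp_neg_le (t : ℝ) : 2 + exp t + exp (-t) ≤ 4 * exp (t ^ 2 / 4) := by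
  have hsq : 2 + exp t + exp (-t) = 4 * cosh (t / 2) ^ 2 := by
    have h₁ : exp (t / 2) ^ 2 = exp t := by rw [← exp_nat_mul]; ring_nf
    have h₂ : exp (-(t / 2)) ^ 2 = exp (-t) := by rw [← exp_nat_mul]; ring_nf
    have h₃ : exp (t / 2) * exp (-(t / 2)) = 1 := by rw [← exp_add]; simp
    rw [cosh_eq]
    linear_combination -h₁ - h₂ - 2 * h₃
  have hcosh : cosh (t / 2) ^ 2 ≤ exp (t ^ 2 / 4) := by
    calc cosh (t / 2) ^ 2 ≤ exp ((t / 2) ^ 2 / 2) ^ 2 := by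
          gcongr
          exact cosh_le_exp_half_sq _
      _ = exp (t ^ 2 / 4) := by rw [← exp_nat_mul]; ring_nf
  rw [hsq]
  gcongr

section Cube

variable {n : ℕ}

def cubeSlice (A : Finset (Fin (n + 1) → Bool)) (b : Bool) : Finset (Fin n → Bool) :=
  {y | Fin.cons b y ∈ A}

theorem mem_cubeSlice {A : Finset (Fin (n + 1) → Bool)} {b : Bool} {y : Fin n → Bool} :
    y ∈ cubeSlice A b ↔ Fin.cons b y ∈ A := by
  simp [cubeSlice]

theorem card_eq_sum_card_cubeSlice (A : Finset (Fin (n + 1) → Bool)) :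
    #A = ∑ b, #(cubeSlice A b) := by
  calc #A = ∑ x, if x ∈ A then 1 else 0 := by simp
    _ = ∑ b, ∑ y, if Fin.cons b y ∈ A then 1 else 0 := Fintype.sum_pi_fin_succ _
    _ = ∑ b, #(cubeSlice A b) := by simp [cubeSlice, sum_boole]

theorem infHammingDist_cons_le (A : Finset (Fin (n + 1) → Bool)) (b c : Bool) (y : Fin n → Bool)
    (hc : (cubeSlice A c).Nonempty) :
    infHammingDist A (Fin.cons b y) ≤
      infHammingDist (cubeSlice A c) y + if b = c then 0 else 1 := by
  obtain ⟨z, hz, hd⟩ := exists_mem_infHammingDist_eq hc y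
  calc infHammingDist A (Fin.cons b y)
      ≤ hammingDist (Fin.cons b y : Fin (n + 1) → Bool) (Fin.cons c z) :=
        infHammingDist_le (mem_cubeSlice.1 hz) _
    _ = _ := by rw [hammingDist_cons, hd]

theorem sum_exp_infHammingDist_cons_le {t : ℝ} (ht : 0 ≤ t) (A : Finset (Fin (n + 1) → Bool))
    (b c : Bool) (hc : (cubeSlice A c).Nonempty) :
    ∑ y, exp (t * infHammingDist A (Fin.cons b y)) ≤
      (if b = c then 1 else exp t) * ∑ y, exp (t * infHammingDist (cubeSlice A c) y) := by
  rw [mul_sum]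
  refine sum_le_sum fun y _ => ?_
  have h : (infHammingDist A (Fin.cons b y) : ℝ) ≤
      infHammingDist (cubeSlice A c) y + if b = c then 0 else 1 := by
    exact_mod_cast infHammingDist_cons_le A b c y hc
  calc exp (t * infHammingDist A (Fin.cons b y))
      ≤ exp (t * (infHammingDist (cubeSlice A c) y + if b = c then 0 else 1)) := by gcongr
    _ = _ := by split_ifs <;> simp [mul_add, exp_add, mul_comm]

theorem card_mul_sum_exp_infHammingDist_succ_le {t C : ℝ} (ht : 0 ≤ t)
    (ih : ∀ B : Finset (Fin n → Bool), #B * ∑ y, exp (t * infHammingDist B y) ≤ C)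
    (A : Finset (Fin (n + 1) → Bool)) (c : Bool) (hc : (cubeSlice A c).Nonempty)
    (hle : #(cubeSlice A !c) ≤ #(cubeSlice A c)) :
    #A * ∑ x, exp (t * infHammingDist A x) ≤ (2 + exp t + exp (-t)) * C := by
  rw [card_eq_sum_card_cubeSlice, Fintype.sum_pi_fin_succ, Bool.sum_eq_add_not _ c,
    Bool.sum_eq_add_not _ c, exp_neg]
  push_cast
  refine add_mul_add_le_of_slice_bounds (exp_pos t) (Nat.cast_nonneg _) (by exact_mod_cast hle)
    (sum_nonneg fun _ _ => (exp_pos _).le) ?_ ?_ ?_ (ih _) (ih _)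
  · simpa using sum_exp_infHammingDist_cons_le ht A c c hc
  · simpa using sum_exp_infHammingDist_cons_le ht A (!c) c hc
  · intro h
    simpa using sum_exp_infHammingDist_cons_le ht A (!c) (!c) (card_pos.1 (by exact_mod_cast h))

theorem card_mul_sum_exp_infHammingDist_le {t : ℝ} (ht : 0 ≤ t) :
    ∀ (n : ℕ) (A : Finset (Fin n → Bool)),
      #A * ∑ x, exp (t * infHammingDist A x) ≤ (2 + exp t + exp (-t)) ^ n
  | 0, A => by
    have hA : #A ≤ 1 := by simpa using card_le_univ A
    have hd : ∀ x, infHammingDist A x = 0 := fun x => by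
      simp [infHammingDist, hammingDist_eq_zero.2 (Subsingleton.elim x _)]
    simpa [hd] using hA
  | n + 1, A => by
    rw [pow_succ']
    obtain ⟨c, hle⟩ : ∃ c, #(cubeSlice A !c) ≤ #(cubeSlice A c) :=
      (le_total #(cubeSlice A true) #(cubeSlice A false)).elim (⟨false, ·⟩) (⟨true, ·⟩)
    rcases (cubeSlice A c).eq_empty_or_nonempty with hc | hc
    · have hA : A = ∅ := by
        rw [← card_eq_zero, card_eq_sum_card_cubeSlice, Bool.sum_eq_add_not _ c, hc]
        simpa [hc] using hle
      simp only [hA, card_empty, Nat.cast_zero, zero_mul]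
      positivity
    exact card_mul_sum_exp_infHammingDist_succ_le ht
      (card_mul_sum_exp_infHammingDist_le ht n) A c hc hle

theorem card_infHammingDist_ge_mul_le {t : ℝ} (ht : 0 ≤ t) (A : Finset (Fin n → Bool)) (r : ℝ) :
    #{x | r ≤ infHammingDist A x} * #A * exp (t * r) ≤ (2 + exp t + exp (-t)) ^ n := by
  have hfar : #{x | r ≤ infHammingDist A x} * exp (t * r) ≤ ∑ x, exp (t * infHammingDist A x) :=
    calc #{x | r ≤ infHammingDist A x} * exp (t * r)
        ≤ ∑ x ∈ {x | r ≤ (infHammingDist A x : ℝ)}, exp (t * infHammingDist A x) := by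
          rw [← nsmul_eq_mul]
          refine card_nsmul_le_sum _ _ _ fun x hx => ?_
          gcongr
          exact (mem_filter.1 hx).2
      _ ≤ ∑ x, exp (t * infHammingDist A x) :=
          sum_le_sum_of_subset_of_nonneg (subset_univ _) fun _ _ _ => (exp_pos _).le
  calc #{x | r ≤ infHammingDist A x} * #A * exp (t * r)
      = #A * (#{x | r ≤ infHammingDist A x} * exp (t * r)) := by ring
    _ ≤ #A * ∑ x, exp (t * infHammingDist A x) := by gcongr
    _ ≤ (2 + exp t + exp (-t)) ^ n := card_mul_sum_exp_infHammingDist_le ht n A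

theorem card_infHammingDist_ge_div_le {ε : ℝ} (hε : 0 ≤ ε) {A : Finset (Fin n → Bool)}
    (hA : 2 ^ n ≤ 2 * #A) :
    (#{x | ε * n ≤ infHammingDist A x} : ℝ) / 2 ^ n ≤ 2 * exp (-ε ^ 2) ^ n := by
  set u := exp (ε ^ 2) ^ n with hu
  have hu₀ : 0 < u := by positivity
  have hmarkov := card_infHammingDist_ge_mul_le (by positivity : 0 ≤ 2 * ε) A (ε * n)
  have hexp : exp (2 * ε * (ε * n)) = u ^ 2 := by
    rw [hu, ← pow_mul, ← exp_nat_mul]; push_cast; ring_nf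
  have hK : (2 + exp (2 * ε) + exp (-(2 * ε))) ^ n ≤ 2 ^ n * 2 ^ n * u := by
    calc (2 + exp (2 * ε) + exp (-(2 * ε))) ^ n ≤ (4 * exp ((2 * ε) ^ 2 / 4)) ^ n := by
          gcongr
          exact two_add_exp_add_exp_neg_le _
      _ = 2 ^ n * 2 ^ n * u := by rw [← mul_pow, hu, ← mul_pow]; ring_nf
  have hA' : (2 : ℝ) ^ n ≤ 2 * #A := by exact_mod_cast hA
  rw [hexp] at hmarkov
  have hbound :
      (#{x | ε * n ≤ infHammingDist A x} : ℝ) * u * (2 ^ n * u) ≤ 2 * 2 ^ n * (2 ^ n * u) :=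
    calc (#{x | ε * n ≤ infHammingDist A x} : ℝ) * u * (2 ^ n * u)
        = #{x | ε * n ≤ infHammingDist A x} * 2 ^ n * u ^ 2 := by ring
      _ ≤ #{x | ε * n ≤ infHammingDist A x} * (2 * #A) * u ^ 2 := by gcongr
      _ = 2 * (#{x | ε * n ≤ infHammingDist A x} * #A * u ^ 2) := by ring
      _ ≤ 2 * (2 ^ n * 2 ^ n * u) := by linarith [hmarkov.trans hK]
      _ = 2 * 2 ^ n * (2 ^ n * u) := by ring
  rw [exp_neg, inv_pow, ← hu, div_le_iff₀ (by positivity), mul_right_comm, ← div_eq_mul_inv,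
    le_div_iff₀ hu₀]
  exact le_of_mul_le_mul_right hbound (by positivity)

theorem one_sub_ncard_div_eq (s : Set (Fin n → Bool)) :
    1 - (s.ncard : ℝ) / 2 ^ n = sᶜ.ncard / 2 ^ n := by
  have h : (s.ncard : ℝ) + sᶜ.ncard = 2 ^ n := by
    rw [← Nat.cast_add, Set.ncard_add_ncard_compl, Nat.card_eq_fintype_card]
    simp
  rw [eq_div_iff (by positivity), sub_mul, one_mul, div_mul_cancel₀ _ (by positivity)]
  linarith

theorem ncard_compl_thickening_le (hn : 0 < n) {A : Finset (Fin n → Bool)} (hA : A.Nonempty)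
    (ε : ℝ) :
    {x : Fin n → Bool | ∃ a ∈ A, (hammingDist x a : ℝ) / n < ε}ᶜ.ncard ≤
      #{x | ε * n ≤ infHammingDist A x} := by
  rw [← Set.ncard_coe_finset]
  refine Set.ncard_le_ncard (fun x hx => ?_)
  obtain ⟨a, ha, hd⟩ := exists_mem_infHammingDist_eq hA x
  have hfar : ε ≤ (hammingDist x a : ℝ) / n := not_lt.1 fun h => hx ⟨a, ha, h⟩
  simpa [hd] using (le_div_iff₀ (by exact_mod_cast hn)).1 hfar

end Cube

/-- The Hamming cubes `{0,1}^n`, with the normalized Hamming distance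
`d(σ,τ) = |{i : σ_i ≠ τ_i}|/n` and the uniform (normalized counting) measure,
form a Lévy family: for every `ε > 0`,
`sup{1 − μ_n(A_ε) : A ⊆ {0,1}^n, μ_n(A) ≥ 1/2} → 0` as `n → ∞`, where
`A_ε = {x : d(x,A) < ε}` is the open `ε`-thickening of `A`. -/
theorem stmt14 (ε : ℝ) (hε : 0 < ε) :
    Tendsto
      (fun n : ℕ =>
        sSup {r : ℝ | ∃ A : Finset (Fin n → Bool),
          (1 : ℝ) / 2 ≤ (A.card : ℝ) / 2 ^ n ∧
          r = 1 -
            (({x : Fin n → Bool | ∃ a ∈ A, (hammingDist x a : ℝ) / n < ε}).ncard : ℝ)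
              / 2 ^ n})
      atTop (nhds 0) := by
  have hq : exp (-ε ^ 2) < 1 := exp_lt_one_iff.2 (by nlinarith)
  refine squeeze_zero' (g := fun n => 2 * exp (-ε ^ 2) ^ n)
    (Eventually.of_forall fun n => Real.sSup_nonneg ?_)
    ((eventually_gt_atTop 0).mono fun n hn => Real.sSup_le ?_ (by positivity))
    (by simpa using (tendsto_pow_atTop_nhds_zero_of_lt_one (exp_pos _).le hq).const_mul 2)
  · rintro _ ⟨A, -, rfl⟩
    rw [one_sub_ncard_div_eq]
    positivity
  · rintro _ ⟨A, hhalf, rfl⟩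
    have hA : 2 ^ n ≤ 2 * #A := by
      rw [le_div_iff₀ (by positivity)] at hhalf
      exact_mod_cast (by linarith : (2 : ℝ) ^ n ≤ 2 * #A)
    have hne : A.Nonempty := card_pos.1 (by linarith [n.one_le_two_pow])
    rw [one_sub_ncard_div_eq]
    calc _ ≤ (#{x | ε * n ≤ infHammingDist A x} : ℝ) / 2 ^ n := by
          gcongr
          exact_mod_cast ncard_compl_thickening_le hn hne ε
      _ ≤ 2 * exp (-ε ^ 2) ^ n := card_infHammingDist_ge_div_le hε.le hA
end

section
/- Let S^n be the unit sphere of ℝ^{n+1} with the Euclidean distance and its rotation-invariant Borel probability measure μ_n. Then the characteristic size of the spheres tends to √2: for every ε > 0, (μ_n ⊗ μ_n){(x,y) ∈ S^n × S^n : |‖x − y‖ − √2| ≥ ε} → 0 as n → ∞; in particular, for large n the median of the distance between two random points of S^n lies within ε of √2. -/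
open MeasureTheory Metric Filter
open scoped ENNReal RealInnerProductSpace

/-!
Rotation invariance makes `∫ ⟪x, y⟫² dμ(y)` the same for every unit vector `x`; summing over an
orthonormal basis `(eᵢ)` and using `∑ ⟪eᵢ, y⟫² = ‖y‖² = 1` shows that it equals `1 / (n + 1)`.
On the sphere `‖x - y‖² = 2 - 2⟪x, y⟫`, so `|‖x - y‖ - √2| ≥ ε` forces `⟪x, y⟫² ≥ ε² / 2`, and
Markov's inequality bounds the probability of this event by `2 / ((n + 1) ε²)`.
-/

theorem abs_dist_sub_sqrt_two_le {F : Type*} [NormedAddCommGroup F] [InnerProductSpace ℝ F]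
    {x y : F} (hx : ‖x‖ = 1) (hy : ‖y‖ = 1) :
    |dist x y - √2| ≤ √2 * |⟪x, y⟫| := by
  have hdist_sq : dist x y ^ 2 = 2 - 2 * ⟪x, y⟫ := by
    rw [dist_eq_norm, norm_sub_sq_real, hx, hy]; ring
  have hsqrt : √2 ^ 2 = 2 := Real.sq_sqrt zero_le_two
  have hsqrt_pos : 0 < √2 := by positivity
  have hfactor : |dist x y - √2| * (dist x y + √2) = 2 * |⟪x, y⟫| := by
    rw [← abs_of_nonneg (by positivity : 0 ≤ dist x y + √2), ← abs_mul,
      show (dist x y - √2) * (dist x y + √2) = -(2 * ⟪x, y⟫) by nlinarith, abs_neg, abs_mul,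
      abs_two]
  have : |dist x y - √2| * √2 ≤ √2 * |⟪x, y⟫| * √2 := by
    calc |dist x y - √2| * √2 ≤ |dist x y - √2| * (dist x y + √2) := by
          gcongr; exact le_add_of_nonneg_left dist_nonneg
      _ = √2 * |⟪x, y⟫| * √2 := by rw [hfactor, mul_right_comm, ← sq, hsqrt]
  exact le_of_mul_le_mul_right this hsqrt_pos

section

variable {E : Type*} [NormedAddCommGroup E] [MeasurableSpace E] [BorelSpace E] {μ : Measure E}

theorem ae_norm_eq_one_of_measure_sphere [IsProbabilityMeasure μ] (h : μ (sphere 0 1) = 1) :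
    ∀ᵐ y ∂μ, ‖y‖ = 1 := by
  filter_upwards [(mem_ae_iff_prob_eq_one isClosed_sphere.measurableSet).2 h] with y hy
  exact mem_sphere_zero_iff_norm.1 hy

variable [InnerProductSpace ℝ E]

theorem measurable_ofReal_inner_sq (x : E) :
    Measurable fun y : E => ENNReal.ofReal (⟪x, y⟫ ^ 2) :=
  ((continuous_const.inner continuous_id).pow 2).measurable.ennreal_ofReal

theorem lintegral_inner_sq_eq_of_norm_eq (hinv : ∀ T : E ≃ₗᵢ[ℝ] E, μ.map T = μ) {x z : E}
    (h : ‖z‖ = ‖x‖) :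
    ∫⁻ y, ENNReal.ofReal (⟪z, y⟫ ^ 2) ∂μ = ∫⁻ y, ENNReal.ofReal (⟪x, y⟫ ^ 2) ∂μ := by
  -- the reflection in the hyperplane orthogonal to `z - x` swaps `z` and `x`
  set T : E ≃ₗᵢ[ℝ] E := Submodule.reflection (ℝ ∙ (z - x))ᗮ
  have hTz : T z = x := Submodule.reflection_sub h
  calc ∫⁻ y, ENNReal.ofReal (⟪z, y⟫ ^ 2) ∂μ
      = ∫⁻ y, ENNReal.ofReal (⟪T z, T y⟫ ^ 2) ∂μ := by simp only [LinearIsometryEquiv.inner_map_map]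
    _ = ∫⁻ y, ENNReal.ofReal (⟪T z, y⟫ ^ 2) ∂(μ.map T) :=
        (lintegral_map (measurable_ofReal_inner_sq _) T.continuous.measurable).symm
    _ = ∫⁻ y, ENNReal.ofReal (⟪x, y⟫ ^ 2) ∂μ := by rw [hinv, hTz]

variable [FiniteDimensional ℝ E]

theorem lintegral_inner_sq_eq_inv_finrank [IsProbabilityMeasure μ] (hsupp : μ (sphere 0 1) = 1)
    (hinv : ∀ T : E ≃ₗᵢ[ℝ] E, μ.map T = μ) {x : E} (hx : ‖x‖ = 1) :
    ∫⁻ y, ENNReal.ofReal (⟪x, y⟫ ^ 2) ∂μ = (Module.finrank ℝ E : ℝ≥0∞)⁻¹ := by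
  set b := stdOrthonormalBasis ℝ E
  have hsum : ∀ y, ∑ i, ⟪b i, y⟫ ^ 2 = ‖y‖ ^ 2 := fun y => by
    rw [← real_inner_self_eq_norm_sq, ← b.sum_inner_mul_inner y y]
    exact Finset.sum_congr rfl fun i _ => by rw [sq, real_inner_comm (b i) y]
  refine ENNReal.eq_inv_of_mul_eq_one_left ?_
  calc (∫⁻ y, ENNReal.ofReal (⟪x, y⟫ ^ 2) ∂μ) * Module.finrank ℝ E
      = ∑ i, ∫⁻ y, ENNReal.ofReal (⟪b i, y⟫ ^ 2) ∂μ := by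
        rw [Finset.sum_congr rfl fun i _ =>
            lintegral_inner_sq_eq_of_norm_eq hinv ((b.orthonormal.1 i).trans hx.symm),
          Finset.sum_const, Finset.card_univ, Fintype.card_fin, nsmul_eq_mul, mul_comm]
    _ = ∫⁻ y, ENNReal.ofReal (∑ i, ⟪b i, y⟫ ^ 2) ∂μ := by
        rw [← lintegral_finsetSum _ fun i _ => measurable_ofReal_inner_sq _]
        exact lintegral_congr fun y => (ENNReal.ofReal_sum_of_nonneg fun i _ => sq_nonneg _).symm
    _ = ∫⁻ _, 1 ∂μ := lintegral_congr_ae <|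
        (ae_norm_eq_one_of_measure_sphere hsupp).mono fun y hy => by simp [hsum, hy]
    _ = 1 := by simp

theorem lintegral_prod_inner_sq_eq_inv_finrank [IsProbabilityMeasure μ]
    (hsupp : μ (sphere 0 1) = 1) (hinv : ∀ T : E ≃ₗᵢ[ℝ] E, μ.map T = μ) :
    ∫⁻ p, ENNReal.ofReal (⟪p.1, p.2⟫ ^ 2) ∂(μ.prod μ) = (Module.finrank ℝ E : ℝ≥0∞)⁻¹ := by
  rw [lintegral_prod _
      ((measurable_fst.inner measurable_snd).pow_const 2).ennreal_ofReal.aemeasurable,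
    lintegral_congr_ae ((ae_norm_eq_one_of_measure_sphere hsupp).mono fun x hx =>
      lintegral_inner_sq_eq_inv_finrank hsupp hinv hx)]
  simp

theorem measure_prod_abs_dist_sub_sqrt_two_ge_le [IsProbabilityMeasure μ]
    (hsupp : μ (sphere 0 1) = 1) (hinv : ∀ T : E ≃ₗᵢ[ℝ] E, μ.map T = μ) {ε : ℝ} (hε : 0 < ε) :
    (μ.prod μ) {p | ε ≤ |dist p.1 p.2 - √2|} ≤
      (Module.finrank ℝ E : ℝ≥0∞)⁻¹ / ENNReal.ofReal (ε ^ 2 / 2) := by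
  have hsphere : ∀ᵐ p ∂(μ.prod μ), ‖p.1‖ = 1 ∧ ‖p.2‖ = 1 :=
    (Measure.quasiMeasurePreserving_fst.ae (ae_norm_eq_one_of_measure_sphere hsupp)).and
      (Measure.quasiMeasurePreserving_snd.ae (ae_norm_eq_one_of_measure_sphere hsupp))
  have hsub : {p : E × E | ε ≤ |dist p.1 p.2 - √2|} ≤ᵐ[μ.prod μ]
      {p | ENNReal.ofReal (ε ^ 2 / 2) ≤ ENNReal.ofReal (⟪p.1, p.2⟫ ^ 2)} := by
    filter_upwards [hsphere] with p ⟨h1, h2⟩ hp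
    have hle : ε ≤ √2 * |⟪p.1, p.2⟫| := hp.trans (abs_dist_sub_sqrt_two_le h1 h2)
    have hsq := pow_le_pow_left₀ hε.le hle 2
    rw [mul_pow, sq_abs, Real.sq_sqrt zero_le_two] at hsq
    exact ENNReal.ofReal_le_ofReal (by linarith)
  calc (μ.prod μ) {p | ε ≤ |dist p.1 p.2 - √2|}
      ≤ (μ.prod μ) {p | ENNReal.ofReal (ε ^ 2 / 2) ≤ ENNReal.ofReal (⟪p.1, p.2⟫ ^ 2)} :=
        measure_mono_ae hsub
    _ ≤ (∫⁻ p, ENNReal.ofReal (⟪p.1, p.2⟫ ^ 2) ∂(μ.prod μ)) / ENNReal.ofReal (ε ^ 2 / 2) :=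
        meas_ge_le_lintegral_div (continuous_inner.pow 2).measurable.ennreal_ofReal.aemeasurable
          (by positivity) ENNReal.ofReal_ne_top
    _ = _ := by rw [lintegral_prod_inner_sq_eq_inv_finrank hsupp hinv]

end

/-- The characteristic size of the unit Euclidean spheres tends to `√2`: if `μ_n`
is the rotation-invariant Borel probability measure on the unit sphere
`S^n ⊆ ℝ^{n+1}` (formalized as a probability measure on `ℝ^{n+1}` carried by the
sphere and invariant under all linear isometries), then for every `ε > 0`,
`(μ_n ⊗ μ_n){(x,y) : |‖x − y‖ − √2| ≥ ε} → 0` as `n → ∞`. -/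
theorem stmt15 (μ : ∀ n : ℕ, Measure (EuclideanSpace ℝ (Fin (n + 1))))
    (hprob : ∀ n, IsProbabilityMeasure (μ n))
    (hsupp : ∀ n, μ n (Metric.sphere (0 : EuclideanSpace ℝ (Fin (n + 1))) 1) = 1)
    (hinv : ∀ n, ∀ T : EuclideanSpace ℝ (Fin (n + 1)) ≃ₗᵢ[ℝ]
        EuclideanSpace ℝ (Fin (n + 1)), Measure.map T (μ n) = μ n)
    (ε : ℝ) (hε : 0 < ε) :
    Tendsto
      (fun n : ℕ => ((μ n).prod (μ n))
        {p : EuclideanSpace ℝ (Fin (n + 1)) × EuclideanSpace ℝ (Fin (n + 1)) |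
          ε ≤ |dist p.1 p.2 - Real.sqrt 2|})
      atTop (nhds 0) := by
  have hbound : ∀ n, ((μ n).prod (μ n)) {p | ε ≤ |dist p.1 p.2 - √2|} ≤
      ((n + 1 : ℕ) : ℝ≥0∞)⁻¹ / ENNReal.ofReal (ε ^ 2 / 2) := fun n => by
    have := hprob n
    simpa only [finrank_euclideanSpace_fin] using
      measure_prod_abs_dist_sub_sqrt_two_ge_le (hsupp n) (hinv n) hε
  have hlim : Tendsto (fun n : ℕ => ((n + 1 : ℕ) : ℝ≥0∞)⁻¹ / ENNReal.ofReal (ε ^ 2 / 2))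
      atTop (nhds 0) := by
    simpa only [ENNReal.zero_div, Function.comp_def] using
      ENNReal.Tendsto.div_const
        (ENNReal.tendsto_inv_nat_nhds_zero.comp (tendsto_add_atTop_nat 1)) (Or.inr (by positivity))
  exact tendsto_of_tendsto_of_tendsto_of_le_of_le tendsto_const_nhds hlim (fun _ => zero_le ..)
    hbound
end
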